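/- arXiv:funct-an/9707009 — 2 statements merged into one kernel-verified Lean document; each statement's English description precedes it below -/
import Mathlib

section
/- Let α be a strongly continuous one-parameter isometric representation on a Banach space E, z ∈ ℂ, and C a core for α_z. Then for every x ∈ D(α_z) there exists a sequence (x_n) in C such that ‖x_n‖ ≤ ‖x‖ and ‖α_z(x_n)‖ ≤ ‖α_z(x)‖ for every n, and x_n → x, α_z(x_n) → α_z(x) in norm. -/
/-!
Pick core elements `(xₙ, yₙ)` converging to `(x, y)` in the graph of `α_z` and shrink each by the
factor `min (‖x‖ / ‖xₙ‖) (‖y‖ / ‖yₙ‖)`, which tends to `1` as soon as `x ≠ 0` and `y ≠ 0` (for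
`x = 0` the constant pair `(0, y)` will do). That `x ≠ 0` forces `y ≠ 0` is injectivity of `α_z`:
a witness `f` with `f z = 0` satisfies `f (w + s) = α_s (f w)`, so it vanishes on the line
`Im = Im z`, hence on the whole strip, and `x = f 0 = 0`. A function continuous on a closed strip,
holomorphic inside and zero on one edge vanishes identically: extended by its edge values across
that edge, it is continuous with vanishing rectangle integrals, hence holomorphic by Morera's
theorem, and it is zero on a half plane.
-/

open Complex MeasureTheory Filter Topology Set

noncomputable section

/-- The closed horizontal strip between the real axis and the line `Im = z.im`. -/
def hStrip (z : ℂ) : Set ℂ := {y : ℂ | y.im ∈ Set.uIcc 0 z.im}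

/-- A strongly continuous one-parameter (contractive, hence isometric) representation. -/
structure IsOneParamRep {E : Type*} [NormedAddCommGroup E] [NormedSpace ℂ E]
    (α : ℝ → E →L[ℂ] E) : Prop where
  map_add : ∀ s t : ℝ, α (s + t) = (α s).comp (α t)
  map_zero : α 0 = ContinuousLinearMap.id ℂ E
  norm_le : ∀ t : ℝ, ‖α t‖ ≤ 1
  strong_cont : ∀ a : E, Continuous fun t : ℝ => α t a

/-- `(a, b)` lies in the graph of the analytic continuation `α_z`:  there is a function `f`,
continuous on the strip `S(z)`, analytic in its interior, agreeing with `t ↦ α_t a` on `ℝ`,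
with `f z = b`. -/
def HasContVal {E : Type*} [NormedAddCommGroup E] [NormedSpace ℂ E]
    (α : ℝ → E →L[ℂ] E) (z : ℂ) (a b : E) : Prop :=
  ∃ f : ℂ → E, ContinuousOn f (hStrip z) ∧
    DifferentiableOn ℂ f (interior (hStrip z)) ∧
    (∀ t : ℝ, f t = α t a) ∧ f z = b

section StripUniqueness

variable {E : Type*} [NormedAddCommGroup E] [NormedSpace ℂ E]

open intervalIntegral

theorem intervalIntegral_eq_integral_max_of_forall_le_eq_zero {h : ℝ → E} {a : ℝ}
    (hh : Continuous h) (hzero : ∀ y ≤ a, h y = 0) (c d : ℝ) :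
    ∫ y in c..d, h y = ∫ y in max c a..max d a, h y := by
  have from_a : ∀ c, ∫ y in a..max c a, h y = ∫ y in a..c, h y := by
    intro c
    rcases le_total c a with hc | hc
    · rw [max_eq_right hc, integral_same, integral_congr (g := fun _ => 0) fun y hy => hzero y ?_,
        intervalIntegral.integral_zero]
      rw [uIcc_of_ge hc] at hy
      exact hy.2
    · rw [max_eq_left hc]
  rw [← integral_interval_sub_left (hh.intervalIntegrable a d) (hh.intervalIntegrable a c),
    ← from_a c, ← from_a d, integral_interval_sub_left (hh.intervalIntegrable _ _)
      (hh.intervalIntegrable _ _)]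

theorem isConservativeOn_of_forall_im_le_eq_zero {G : ℂ → E} {a b : ℝ} (hG : Continuous G)
    (hzero : ∀ w : ℂ, w.im ≤ a → G w = 0) (hd : DifferentiableOn ℂ G (im ⁻¹' Ioo a b)) :
    IsConservativeOn G (im ⁻¹' Iio b) := by
  intro z w hzw
  have hz : z.im < b := hzw (by simp [Rectangle, mem_reProdIm])
  have hw : w.im < b := hzw (by simp [Rectangle, mem_reProdIm])
  have horizontal : ∀ y : ℝ, (fun x : ℝ => G (x + y * I)) = fun x : ℝ => G (x + max y a * I) := by
    intro y
    rcases le_total y a with hy | hy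
    · ext x
      rw [hzero _ (by simpa using hy), hzero _ (by simp [hy])]
    · rw [max_eq_left hy]
  have vertical : ∀ x : ℝ, ∫ y in z.im..w.im, G (x + y * I) =
      ∫ y in max z.im a..max w.im a, G (x + y * I) := fun x =>
    intervalIntegral_eq_integral_max_of_forall_le_eq_zero (by fun_prop)
      (fun y hy => hzero _ (by simpa using hy)) _ _
  rw [← add_eq_zero_iff_eq_neg, wedgeIntegral_add_wedgeIntegral_eq, horizontal z.im,
    horizontal w.im, vertical, vertical]
  have := integral_boundary_rect_eq_zero_of_continuousOn_of_differentiableOn G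
    (z.re + max z.im a * I) (w.re + max w.im a * I) hG.continuousOn (hd.mono fun v hv => ?_)
  · simpa using this
  · simp only [mem_reProdIm, add_re, ofReal_re, mul_re, I_re, mul_zero, ofReal_im, I_im, mul_one,
      sub_self, add_zero, add_im, mul_im, zero_add, mem_Ioo] at hv
    have hav : a < v.im := (le_min (le_max_right _ _) (le_max_right _ _)).trans_lt hv.2.1
    refine ⟨hav, ?_⟩
    rcases lt_max_iff.1 hv.2.2 with h | h <;> rcases lt_max_iff.1 h with h | h
    all_goals linarith

theorem eqOn_zero_of_forall_add_mul_I_eq_zero_of_lt [CompleteSpace E] {f : ℂ → E} {a b : ℝ}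
    (hab : a < b) (hc : ContinuousOn f (im ⁻¹' Icc a b))
    (hd : DifferentiableOn ℂ f (im ⁻¹' Ioo a b)) (h0 : ∀ t : ℝ, f (t + a * I) = 0) :
    EqOn f 0 (im ⁻¹' Icc a b) := by
  -- `G` continues `f` below the strip by its (vanishing) values on the line `im = a`.
  set G : ℂ → E := fun w => f (w.re + max a (min w.im b) * I)
  have hGf : EqOn G f (im ⁻¹' Icc a b) := fun w hw => by
    simp only [G, min_eq_left hw.2, max_eq_right hw.1, re_add_im]
  have hGcont : Continuous G := hc.comp_continuous (by fun_prop) fun w => by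
    simp only [mem_preimage, add_im, ofReal_im, mul_im, ofReal_re, I_im, mul_one, I_re, mul_zero,
      zero_add, add_zero]
    exact ⟨le_max_left _ _, max_le hab.le (min_le_right _ _)⟩
  have hGzero : ∀ w : ℂ, w.im ≤ a → G w = 0 := fun w hw => by
    simp only [G, max_eq_left (min_le_of_left_le hw), h0]
  have hU : IsOpen (im ⁻¹' Iio b) := isOpen_Iio.preimage continuous_im
  have hGan : AnalyticOnNhd ℂ G (im ⁻¹' Iio b) :=
    ((isConservativeOn_and_continuousOn_iff_isDifferentiableOn hU).1
      ⟨isConservativeOn_of_forall_im_le_eq_zero hGcont hGzero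
        (hd.congr (hGf.mono (preimage_mono Ioo_subset_Icc_self))), hGcont.continuousOn⟩
      ).analyticOnNhd hU
  have hG0 : EqOn G 0 (im ⁻¹' Iio b) :=
    hGan.eqOn_zero_of_preconnected_of_eventuallyEq_zero (convex_halfSpace_im_lt b).isPreconnected
      (z₀ := (a - 1) * I) (by simp [hab.trans' (sub_one_lt a)]) <|
      eventually_of_mem
        ((isOpen_lt continuous_im continuous_const).mem_nhds (by simp : ((a - 1) * I).im < a))
        fun w hw => hGzero w hw.le
  intro w hw
  rw [← hGf hw]
  refine hG0.closure hGcont continuous_const ?_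
  rw [closure_preimage_im, closure_Iio]
  exact hw.2

theorem eqOn_zero_of_forall_add_mul_I_eq_zero [CompleteSpace E] {f : ℂ → E} {a b : ℝ}
    (hc : ContinuousOn f (im ⁻¹' uIcc a b))
    (hd : DifferentiableOn ℂ f (im ⁻¹' Ioo (min a b) (max a b)))
    (h0 : ∀ t : ℝ, f (t + a * I) = 0) :
    EqOn f 0 (im ⁻¹' uIcc a b) := by
  rcases lt_trichotomy a b with hab | rfl | hba
  · rw [uIcc_of_lt hab] at hc ⊢
    rw [min_eq_left hab.le, max_eq_right hab.le] at hd
    exact eqOn_zero_of_forall_add_mul_I_eq_zero_of_lt hab hc hd h0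
  · intro w hw
    simp only [uIcc_self, mem_preimage, mem_singleton_iff] at hw
    simpa [← hw, re_add_im] using h0 w.re
  · rw [uIcc_of_gt hba] at hc ⊢
    rw [min_eq_right hba.le, max_eq_left hba.le] at hd
    have hneg := eqOn_zero_of_forall_add_mul_I_eq_zero_of_lt (f := fun w => f (-w)) (neg_lt_neg hba)
      (hc.comp continuous_neg.continuousOn fun w hw => by
        simp only [mem_preimage, mem_Icc, neg_im] at hw ⊢; constructor <;> linarith [hw.1, hw.2])
      (hd.comp (differentiableOn_neg _) fun w hw => by
        simp only [mem_preimage, mem_Ioo, neg_im] at hw ⊢; constructor <;> linarith [hw.1, hw.2])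
      fun t => by
        rw [show -((t : ℂ) + (-a : ℝ) * I) = (-t : ℝ) + a * I by push_cast; ring]
        exact h0 (-t)
    intro w hw
    simpa using hneg (show -w ∈ im ⁻¹' Icc (-a) (-b) by
      simp only [mem_preimage, mem_Icc, neg_im] at hw ⊢; constructor <;> linarith [hw.1, hw.2])

end StripUniqueness

theorem interior_hStrip (z : ℂ) :
    interior (hStrip z) = im ⁻¹' Ioo (min 0 z.im) (max 0 z.im) := by
  change interior (im ⁻¹' uIcc 0 z.im) = _
  rw [interior_preimage_im, uIcc, interior_Icc]

section AnalyticContinuation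

variable {E : Type*} [NormedAddCommGroup E] [NormedSpace ℂ E] {α : ℝ → E →L[ℂ] E} {z : ℂ}

theorem HasContVal.smul {a b : E} (c : ℂ) (h : HasContVal α z a b) :
    HasContVal α z (c • a) (c • b) := by
  obtain ⟨f, hc, hd, hreal, hz⟩ := h
  exact ⟨c • f, hc.const_smul c, hd.const_smul c, fun t => by simp [hreal], by simp [hz]⟩

variable [CompleteSpace E]

theorem IsOneParamRep.eqOn_comp_add_ofReal (hα : IsOneParamRep α) {f : ℂ → E} {x : E}
    (hc : ContinuousOn f (hStrip z)) (hd : DifferentiableOn ℂ f (interior (hStrip z)))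
    (hreal : ∀ t : ℝ, f t = α t x) (s : ℝ) :
    EqOn (fun w => f (w + s)) (fun w => α s (f w)) (hStrip z) := by
  rw [interior_hStrip] at hd
  have hshift : MapsTo (· + (s : ℂ)) (hStrip z) (hStrip z) := fun w hw => by simpa [hStrip] using hw
  have hzero := eqOn_zero_of_forall_add_mul_I_eq_zero (f := fun w => f (w + s) - α s (f w))
    (a := 0) (b := z.im) ((hc.comp (continuous_add_const _).continuousOn hshift).sub
      ((α s).continuous.comp_continuousOn hc))
    ((hd.comp (differentiableOn_id.add_const _) fun w hw => by simpa using hw).sub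
      ((α s).differentiable.comp_differentiableOn hd))
    fun t => by
      rw [ofReal_zero, zero_mul, add_zero, ← ofReal_add, hreal, hreal, add_comm, hα.map_add,
        ContinuousLinearMap.comp_apply, sub_self]
  exact fun w hw => sub_eq_zero.1 (hzero hw)

theorem IsOneParamRep.eq_zero_of_hasContVal_zero (hα : IsOneParamRep α) {x : E}
    (h : HasContVal α z x 0) : x = 0 := by
  obtain ⟨f, hc, hd, hreal, hz⟩ := h
  have htop : ∀ t : ℝ, f (t + z.im * I) = 0 := fun t => by
    have := hα.eqOn_comp_add_ofReal hc hd hreal (t - z.re) (right_mem_uIcc : z.im ∈ _)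
    simp only at this
    rwa [hz, (α _).map_zero, show z + ((t - z.re : ℝ) : ℂ) = t + z.im * I by
      apply Complex.ext <;> simp] at this
  rw [interior_hStrip, min_comm, max_comm] at hd
  have hzero := eqOn_zero_of_forall_add_mul_I_eq_zero (a := z.im) (b := 0)
    (by rw [uIcc_comm]; exact hc) hd htop
  calc x = α 0 x := by rw [hα.map_zero]; rfl
    _ = f (0 : ℝ) := (hreal 0).symm
    _ = 0 := hzero (by simp)

end AnalyticContinuation

theorem exists_seq_norm_le_tendsto_of_mem_closure {E F : Type*} [NormedAddCommGroup E]
    [NormedSpace ℝ E] [NormedAddCommGroup F] [NormedSpace ℝ F] {S : Set (E × F)}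
    (hS : ∀ r : ℝ, 0 ≤ r → ∀ p ∈ S, r • p ∈ S) {x : E} {y : F} (hx : x ≠ 0) (hy : y ≠ 0)
    (hxy : (x, y) ∈ closure S) :
    ∃ p : ℕ → E × F, (∀ n, p n ∈ S ∧ ‖(p n).1‖ ≤ ‖x‖ ∧ ‖(p n).2‖ ≤ ‖y‖) ∧
      Tendsto p atTop (𝓝 (x, y)) := by
  obtain ⟨q, hqS, hq⟩ := mem_closure_iff_seq_limit.1 hxy
  set r : ℕ → ℝ := fun n => min (‖x‖ / ‖(q n).1‖) (‖y‖ / ‖(q n).2‖)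
  have hr0 : ∀ n, 0 ≤ r n := fun n => le_min (by positivity) (by positivity)
  have hr1 : Tendsto r atTop (𝓝 1) := by
    have h₁ := (tendsto_const_nhds (x := ‖x‖)).div hq.fst_nhds.norm (norm_ne_zero_iff.2 hx)
    have h₂ := (tendsto_const_nhds (x := ‖y‖)).div hq.snd_nhds.norm (norm_ne_zero_iff.2 hy)
    simpa [div_self (norm_ne_zero_iff.2 hx), div_self (norm_ne_zero_iff.2 hy)] using h₁.min h₂
  refine ⟨fun n => r n • q n, fun n => ⟨hS _ (hr0 n) _ (hqS n), ?_, ?_⟩, by simpa using hr1.smul hq⟩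
  · rw [Prod.smul_fst, norm_smul, Real.norm_of_nonneg (hr0 n)]
    exact mul_le_of_le_div₀ (norm_nonneg _) (norm_nonneg _) (min_le_left _ _)
  · rw [Prod.smul_snd, norm_smul, Real.norm_of_nonneg (hr0 n)]
    exact mul_le_of_le_div₀ (norm_nonneg _) (norm_nonneg _) (min_le_right _ _)

theorem core_norm_controlled_approx_general
    {E : Type*} [NormedAddCommGroup E] [NormedSpace ℂ E] [CompleteSpace E]
    {α : ℝ → E →L[ℂ] E} (hα : IsOneParamRep α) (z : ℂ) (C : Submodule ℂ E)
    (hCcore : closure {p : E × E | p.1 ∈ C ∧ HasContVal α z p.1 p.2}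
      = {p : E × E | HasContVal α z p.1 p.2})
    (x y : E) (hx : HasContVal α z x y) :
    ∃ xs ys : ℕ → E,
      (∀ n, xs n ∈ C ∧ HasContVal α z (xs n) (ys n) ∧ ‖xs n‖ ≤ ‖x‖ ∧ ‖ys n‖ ≤ ‖y‖) ∧
      Tendsto xs atTop (nhds x) ∧ Tendsto ys atTop (nhds y) := by
  rcases eq_or_ne x 0 with rfl | hx0
  · exact ⟨fun _ => 0, fun _ => y, fun _ => ⟨C.zero_mem, hx, by simp, le_rfl⟩,
      tendsto_const_nhds, tendsto_const_nhds⟩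
  have hy0 : y ≠ 0 := fun hy => hx0 (hα.eq_zero_of_hasContVal_zero (hy ▸ hx))
  set S := {p : E × E | p.1 ∈ C ∧ HasContVal α z p.1 p.2}
  have hS : ∀ r : ℝ, 0 ≤ r → ∀ p ∈ S, r • p ∈ S := fun r _ p hp =>
    ⟨C.smul_of_tower_mem r hp.1, by
      simpa only [Prod.smul_fst, Prod.smul_snd, Complex.coe_smul] using hp.2.smul (r : ℂ)⟩
  obtain ⟨p, hpS, hp⟩ := exists_seq_norm_le_tendsto_of_mem_closure hS hx0 hy0 (hCcore ▸ hx)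
  exact ⟨fun n => (p n).1, fun n => (p n).2, fun n => ⟨(hpS n).1.1, (hpS n).1.2, (hpS n).2⟩,
    hp.fst_nhds, hp.snd_nhds⟩

/-- If `C` is a core for `α_z` and `x ∈ D(α_z)`, then there is a sequence `(xₙ)` in `C` with
`‖xₙ‖ ≤ ‖x‖`, `‖α_z xₙ‖ ≤ ‖α_z x‖`, `xₙ → x` and `α_z xₙ → α_z x`. -/
theorem core_norm_controlled_approx
    {E : Type*} [NormedAddCommGroup E] [NormedSpace ℂ E] [CompleteSpace E]
    {α : ℝ → E →L[ℂ] E} (hα : IsOneParamRep α) (z : ℂ) (C : Submodule ℂ E)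
    (hCdom : ∀ c ∈ C, ∃ b, HasContVal α z c b)
    (hCcore : closure {p : E × E | p.1 ∈ C ∧ HasContVal α z p.1 p.2}
      = {p : E × E | HasContVal α z p.1 p.2})
    (x y : E) (hx : HasContVal α z x y) :
    ∃ xs ys : ℕ → E,
      (∀ n, xs n ∈ C ∧ HasContVal α z (xs n) (ys n) ∧ ‖xs n‖ ≤ ‖x‖ ∧ ‖ys n‖ ≤ ‖y‖) ∧
      Tendsto xs atTop (nhds x) ∧ Tendsto ys atTop (nhds y) :=
  core_norm_controlled_approx_general hα z C hCcore x y hx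
end
end

section
/- Let u be a strongly continuous one-parameter group of unitaries on a Hilbert space H and z ∈ iℝ, z ≠ 0. Then the operator 1 + u_z has dense range in H. -/
open Complex MeasureTheory Filter Topology Set

noncomputable section

/-!
Let `φ` be a continuous functional vanishing on every `a + u_z a`. For `ε ≠ 0` the Gaussian
smoothing `F w = ∫ exp (-(s - w / ε)²) u_{εs} a ds` is entire and extends the orbit
`t ↦ u_t (F 0)`, so `(F t, F (t + z))` lies in the graph of `u_z` and `h = φ ∘ F` satisfies
`h (t + z) = -h t` on `ℝ`, hence on `ℂ` by the identity theorem. Thus `h` is `2z`-periodic, and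
the Gaussian bound `‖F w‖ ≤ √π exp ((Im w / ε)²) ‖a‖` makes it bounded on a period strip, hence
on `ℂ`; by Liouville it is constant, hence zero. Since `F 0 → √π a` as `ε → 0`, `φ a = 0`.
-/

open Function Bornology
open scoped Real

section Entire
variable {E : Type*} [NormedAddCommGroup E] [NormedSpace ℂ E]

theorem Function.Periodic.range_subset_image_abs_im_le {α : Type*} {f : ℂ → α} {p : ℂ}
    (hf : Periodic f p) (hp : p.im ≠ 0) : range f ⊆ f '' {w | |w.im| ≤ |p.im|} := by
  rintro _ ⟨w, rfl⟩
  refine ⟨w - round (w.im / p.im) * p, ?_, hf.sub_int_mul_eq _⟩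
  have him : (w - round (w.im / p.im) * p).im = p.im * (w.im / p.im - round (w.im / p.im)) := by
    simp only [sub_im, mul_im, intCast_re, intCast_im, zero_mul, add_zero]
    field_simp
  calc |(w - round (w.im / p.im) * p).im|
      = |p.im| * |w.im / p.im - round (w.im / p.im)| := by rw [him, abs_mul]
    _ ≤ |p.im| * 1 := by gcongr; exact (abs_sub_round _).trans (by norm_num)
    _ = |p.im| := mul_one _

theorem Differentiable.eq_of_forall_ofReal [CompleteSpace E] {f g : ℂ → E}
    (hf : Differentiable ℂ f) (hg : Differentiable ℂ g) (hfg : ∀ t : ℝ, f t = g t) : f = g := by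
  have hreal : Tendsto ((↑) : ℝ → ℂ) (𝓝[≠] 0) (𝓝[≠] 0) :=
    continuous_ofReal.continuousWithinAt.tendsto_nhdsWithin fun _ _ ↦ by simp_all
  exact AnalyticOnNhd.eq_of_frequently_eq (hf.differentiableOn.analyticOnNhd isOpen_univ)
    (hg.differentiableOn.analyticOnNhd isOpen_univ)
    (hreal.frequently (Frequently.of_forall hfg))

theorem Differentiable.antiperiodic_of_forall_ofReal [CompleteSpace E] {f : ℂ → E}
    (hf : Differentiable ℂ f) {p : ℂ} (hfp : ∀ t : ℝ, f (t + p) = -f t) : Antiperiodic f p :=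
  congr_fun ((hf.comp (differentiable_id.add_const p)).eq_of_forall_ofReal hf.neg hfp)

theorem Differentiable.eq_zero_of_antiperiodic {f : ℂ → E} (hf : Differentiable ℂ f) {p : ℂ}
    (hfp : Antiperiodic f p) (hp : p.im ≠ 0)
    (hb : IsBounded (f '' {w | |w.im| ≤ 2 * |p.im|})) : f = 0 := by
  have h2p : (2 * p).im ≠ 0 := by simpa using hp
  have hrange : IsBounded (range f) := hb.subset <| by
    simpa [abs_mul] using hfp.periodic_two_mul.range_subset_image_abs_im_le h2p
  have hf0 : f 0 = 0 := by
    have h := hfp 0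
    rw [zero_add, hf.apply_eq_apply_of_bounded hrange p 0] at h
    have h2 : (2 : ℂ) • f 0 = 0 := by rw [two_smul]; nth_rw 1 [h]; exact neg_add_cancel _
    simpa using h2
  funext w
  rw [hf.apply_eq_apply_of_bounded hrange w 0, hf0, Pi.zero_apply]

end Entire

section Gaussian

variable {E : Type*} [NormedAddCommGroup E] [NormedSpace ℂ E]
  {g : ℝ → E} {C : ℝ}

theorem norm_cexp_neg_sub_sq (s : ℝ) (c : ℂ) :
    ‖cexp (-(s - c) ^ 2)‖ = Real.exp (c.im ^ 2 - (s - c.re) ^ 2) := by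
  rw [norm_exp]
  congr 1
  simp [sq]

theorem norm_cexp_neg_sub_sq_le (s : ℝ) (c : ℂ) :
    ‖cexp (-(s - c) ^ 2)‖ ≤ Real.exp (‖c‖ ^ 2) * Real.exp (-2⁻¹ * s ^ 2) := by
  rw [norm_cexp_neg_sub_sq, ← Real.exp_add, Complex.sq_norm, normSq_apply]
  gcongr
  nlinarith [sq_nonneg (s - 2 * c.re)]

theorem hasDerivAt_cexp_neg_sub_sq (s : ℝ) (c : ℂ) :
    HasDerivAt (fun c : ℂ => cexp (-(s - c) ^ 2)) (cexp (-(s - c) ^ 2) * (2 * (s - c))) c := by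
  refine (((hasDerivAt_id' c).const_sub (s : ℂ)).fun_pow 2).fun_neg.cexp.congr_deriv ?_
  push_cast
  ring

theorem integrable_abs_add_mul_exp_neg_mul_sq {b : ℝ} (hb : 0 < b) (K : ℝ) :
    Integrable fun s : ℝ => (|s| + K) * Real.exp (-b * s ^ 2) := by
  have habs : Integrable fun s : ℝ => |s| * Real.exp (-b * s ^ 2) := by
    simpa [abs_mul] using (integrable_mul_exp_neg_mul_sq hb).abs
  simp_rw [add_mul]
  exact habs.add ((integrable_exp_neg_mul_sq hb).const_mul K)

theorem integrable_cexp_neg_sub_sq_smul (hg : Continuous g) (hC : ∀ s, ‖g s‖ ≤ C) (c : ℂ) :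
    Integrable fun s : ℝ => cexp (-(s - c) ^ 2) • g s := by
  refine ((integrable_exp_neg_mul_sq (b := 2⁻¹) (by norm_num)).const_mul
    (Real.exp (‖c‖ ^ 2) * C)).mono' (by fun_prop) (Eventually.of_forall fun s => ?_)
  rw [norm_smul, mul_right_comm]
  exact mul_le_mul (norm_cexp_neg_sub_sq_le s c) (hC s) (norm_nonneg _) (by positivity)

def gaussianConv (g : ℝ → E) (c : ℂ) : E := ∫ s : ℝ, cexp (-(s - c) ^ 2) • g s

theorem norm_gaussianConv_le (hC : ∀ s, ‖g s‖ ≤ C) (c : ℂ) :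
    ‖gaussianConv g c‖ ≤ √π * Real.exp (c.im ^ 2) * C := by
  have hgauss : ∫ s : ℝ, Real.exp (-(s - c.re) ^ 2) = √π := by
    rw [integral_sub_right_eq_self (fun s => Real.exp (-s ^ 2)) c.re]
    simpa using integral_gaussian 1
  calc ‖gaussianConv g c‖
      ≤ ∫ s : ℝ, Real.exp (c.im ^ 2) * C * Real.exp (-(s - c.re) ^ 2) := by
        have hint : Integrable fun s : ℝ => Real.exp (-(s - c.re) ^ 2) := by
          simpa using (integrable_exp_neg_mul_sq one_pos).comp_sub_right c.re
        refine norm_integral_le_of_norm_le (hint.const_mul _) (Eventually.of_forall fun s => ?_)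
        rw [norm_smul, norm_cexp_neg_sub_sq, sub_eq_add_neg, Real.exp_add, mul_right_comm]
        gcongr
        exact hC s
    _ = √π * Real.exp (c.im ^ 2) * C := by rw [integral_const_mul, hgauss]; ring

theorem isBounded_image_gaussianConv_abs_im_le (hC : ∀ s, ‖g s‖ ≤ C) (R : ℝ) :
    IsBounded (gaussianConv g '' {c | |c.im| ≤ R}) := by
  refine isBounded_iff_forall_norm_le.2 ⟨√π * Real.exp (R ^ 2) * C, ?_⟩
  rintro _ ⟨c, hc : |c.im| ≤ R, rfl⟩
  have hC0 : 0 ≤ C := (norm_nonneg _).trans (hC 0)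
  have hsq : c.im ^ 2 ≤ R ^ 2 := sq_le_sq' (abs_le.1 hc).1 (abs_le.1 hc).2
  refine (norm_gaussianConv_le hC c).trans ?_
  gcongr

theorem differentiable_gaussianConv [CompleteSpace E] (hg : Continuous g)
    (hC : ∀ s, ‖g s‖ ≤ C) : Differentiable ℂ (gaussianConv g) := by
  intro c₀
  set K := ‖c₀‖ + 1
  have hbound : ∀ s : ℝ, ∀ c ∈ Metric.ball c₀ 1,
      ‖(cexp (-(s - c) ^ 2) * (2 * (s - c))) • g s‖
        ≤ 2 * Real.exp (K ^ 2) * C * ((|s| + K) * Real.exp (-2⁻¹ * s ^ 2)) := by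
    intro s c hc
    have hcK : ‖c‖ ≤ K := by
      have := norm_le_norm_add_norm_sub' c c₀
      rw [Metric.mem_ball, dist_eq_norm] at hc
      linarith
    have hlin : ‖2 * ((s : ℂ) - c)‖ ≤ 2 * (|s| + K) := by
      rw [norm_mul, Complex.norm_two, ← Real.norm_eq_abs, ← Complex.norm_real]
      gcongr
      exact (norm_sub_le _ _).trans (by gcongr)
    calc ‖(cexp (-(s - c) ^ 2) * (2 * (s - c))) • g s‖
        ≤ Real.exp (K ^ 2) * Real.exp (-2⁻¹ * s ^ 2) * (2 * (|s| + K)) * C := by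
          rw [norm_smul, norm_mul]
          gcongr
          · exact (norm_cexp_neg_sub_sq_le s c).trans (by gcongr)
          · exact hC s
      _ = 2 * Real.exp (K ^ 2) * C * ((|s| + K) * Real.exp (-2⁻¹ * s ^ 2)) := by ring
  exact (hasDerivAt_integral_of_dominated_loc_of_deriv_le (Metric.ball_mem_nhds c₀ one_pos)
    (Eventually.of_forall fun c => (by fun_prop))
    (integrable_cexp_neg_sub_sq_smul hg hC c₀) (by fun_prop)
    (Eventually.of_forall hbound)
    ((integrable_abs_add_mul_exp_neg_mul_sq (by norm_num) K).const_mul _)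
    (Eventually.of_forall fun s c _ => (hasDerivAt_cexp_neg_sub_sq s c).smul_const (g s))
    ).2.differentiableAt

theorem gaussianConv_add_ofReal (g : ℝ → E) (c : ℂ) (t : ℝ) :
    gaussianConv g (c + t) = gaussianConv (fun s => g (s + t)) c := by
  rw [gaussianConv, ← integral_add_right_eq_self _ t]
  simp only [gaussianConv, ofReal_add, add_sub_add_right_eq_sub]

theorem ContinuousLinearMap.map_gaussianConv {F : Type*} [NormedAddCommGroup F]
    [NormedSpace ℂ F] [CompleteSpace E] [CompleteSpace F] (L : E →L[ℂ] F) (hg : Continuous g)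
    (hC : ∀ s, ‖g s‖ ≤ C) (c : ℂ) : L (gaussianConv g c) = gaussianConv (fun s => L (g s)) c := by
  rw [gaussianConv, ← L.integral_comp_comm (integrable_cexp_neg_sub_sq_smul hg hC c)]
  simp only [gaussianConv, map_smul]

theorem tendsto_gaussianConv_comp_mul [CompleteSpace E] (hg : Continuous g)
    (hC : ∀ s, ‖g s‖ ≤ C) :
    Tendsto (fun ε : ℝ => gaussianConv (fun s => g (ε * s)) 0) (𝓝 0)
      (𝓝 ((√π : ℂ) • g 0)) := by
  have hlim : Tendsto (fun ε : ℝ => gaussianConv (fun s => g (ε * s)) 0) (𝓝 0)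
      (𝓝 (∫ s : ℝ, cexp (-(s - 0) ^ 2) • g 0)) := by
    refine tendsto_integral_filter_of_dominated_convergence
      (fun s => Real.exp (-2⁻¹ * s ^ 2) * C)
      (Eventually.of_forall fun ε => by fun_prop)
      (Eventually.of_forall fun ε => Eventually.of_forall fun s => ?_)
      ((integrable_exp_neg_mul_sq (by norm_num)).mul_const C)
      (Eventually.of_forall fun s => ?_)
    · rw [norm_smul]
      refine mul_le_mul ?_ (hC _) (norm_nonneg _) (by positivity)
      simpa using norm_cexp_neg_sub_sq_le s 0
    · refine tendsto_const_nhds.smul ((hg.tendsto 0).comp ?_)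
      exact (continuous_mul_const s).tendsto' 0 0 (zero_mul s)
  have hgauss : ∫ s : ℝ, cexp (-(s - 0) ^ 2) = √π := by
    have hreal : ∫ s : ℝ, Real.exp (-s ^ 2) = √π := by simpa using integral_gaussian 1
    rw [← hreal, ← integral_complex_ofReal]
    push_cast
    simp
  rwa [integral_smul_const, hgauss] at hlim

end Gaussian

section OneParamRep

variable {E : Type*} [NormedAddCommGroup E] [NormedSpace ℂ E] {α : ℝ → E →L[ℂ] E}

theorem IsOneParamRep.norm_apply_le (hα : IsOneParamRep α) (t : ℝ) (a : E) : ‖α t a‖ ≤ ‖a‖ := by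
  simpa using (α t).le_of_opNorm_le (hα.norm_le t) a

theorem HasContVal.of_differentiable {f : ℂ → E} (hf : Differentiable ℂ f) {a : E}
    (hfa : ∀ t : ℝ, f t = α t a) (z : ℂ) : HasContVal α z a (f z) :=
  ⟨f, hf.continuous.continuousOn, hf.differentiableOn, hfa, rfl⟩

theorem hasContVal_zero (z : ℂ) : HasContVal α z 0 0 :=
  ⟨0, continuousOn_const, differentiableOn_const 0, fun t => (map_zero (α t)).symm, rfl⟩

theorem HasContVal.add {z : ℂ} {a b a' b' : E} (h : HasContVal α z a b)
    (h' : HasContVal α z a' b') : HasContVal α z (a + a') (b + b') := by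
  obtain ⟨f, hf_cont, hf_diff, hf_real, rfl⟩ := h
  obtain ⟨f', hf'_cont, hf'_diff, hf'_real, rfl⟩ := h'
  exact ⟨f + f', hf_cont.add hf'_cont, hf_diff.add hf'_diff,
    fun t => by simp [hf_real, hf'_real], rfl⟩

theorem HasContVal.const_smul {z : ℂ} {a b : E} (h : HasContVal α z a b) (c : ℂ) :
    HasContVal α z (c • a) (c • b) := by
  obtain ⟨f, hf_cont, hf_diff, hf_real, rfl⟩ := h
  exact ⟨c • f, hf_cont.const_smul c, hf_diff.const_smul c, fun t => by simp [hf_real], rfl⟩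

variable (α) in
def rangeOneAddContVal (z : ℂ) : Submodule ℂ E where
  carrier := {x | ∃ a b, HasContVal α z a b ∧ x = a + b}
  zero_mem' := ⟨0, 0, hasContVal_zero z, (add_zero 0).symm⟩
  add_mem' := by
    rintro _ _ ⟨a, b, hab, rfl⟩ ⟨a', b', hab', rfl⟩
    exact ⟨a + a', b + b', hab.add hab', add_add_add_comm a b a' b'⟩
  smul_mem' := by
    rintro c _ ⟨a, b, hab, rfl⟩
    exact ⟨c • a, c • b, hab.const_smul c, smul_add c a b⟩

theorem IsOneParamRep.continuous_orbit_mul (hα : IsOneParamRep α) (a : E) (ε : ℝ) :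
    Continuous fun s => α (ε * s) a :=
  (hα.strong_cont a).comp (continuous_const_mul ε)

variable (α) in
def smoothOrbit (a : E) (ε : ℝ) (w : ℂ) : E := gaussianConv (fun s => α (ε * s) a) (w / ε)

theorem IsOneParamRep.isBounded_image_smoothOrbit_abs_im_le (hα : IsOneParamRep α) (a : E)
    (ε R : ℝ) : IsBounded (smoothOrbit α a ε '' {w | |w.im| ≤ R}) := by
  refine (isBounded_image_gaussianConv_abs_im_le (g := fun s => α (ε * s) a)
    (fun _ => hα.norm_apply_le _ a) (R / |ε|)).subset ?_
  rintro _ ⟨w, hw : |w.im| ≤ R, rfl⟩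
  refine ⟨w / ε, ?_, rfl⟩
  simpa [div_ofReal_im, abs_div] using div_le_div_of_nonneg_right hw (abs_nonneg ε)

variable [CompleteSpace E]

theorem IsOneParamRep.differentiable_smoothOrbit (hα : IsOneParamRep α) (a : E) (ε : ℝ) :
    Differentiable ℂ (smoothOrbit α a ε) :=
  (differentiable_gaussianConv (hα.continuous_orbit_mul a ε) fun _ => hα.norm_apply_le _ a).comp
    (differentiable_id.div_const _)

theorem IsOneParamRep.smoothOrbit_ofReal (hα : IsOneParamRep α) (a : E) {ε : ℝ} (hε : ε ≠ 0)
    (t : ℝ) : smoothOrbit α a ε t = α t (smoothOrbit α a ε 0) := by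
  rw [smoothOrbit, smoothOrbit, zero_div, (α t).map_gaussianConv (hα.continuous_orbit_mul a ε)
    (fun _ => hα.norm_apply_le _ a), show (t : ℂ) / ε = 0 + ((t / ε : ℝ) : ℂ) by push_cast; ring,
    gaussianConv_add_ofReal]
  congr 1
  funext s
  rw [mul_add, mul_div_cancel₀ t hε, add_comm, hα.map_add t]
  rfl

theorem IsOneParamRep.hasContVal_smoothOrbit (hα : IsOneParamRep α) (a : E) {ε : ℝ}
    (hε : ε ≠ 0) (z : ℂ) (t : ℝ) :
    HasContVal α z (smoothOrbit α a ε t) (smoothOrbit α a ε (t + z)) := by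
  refine HasContVal.of_differentiable (f := fun w => smoothOrbit α a ε (t + w))
    ((hα.differentiable_smoothOrbit a ε).comp (differentiable_id.const_add _)) (fun t' => ?_) z
  rw [show (t : ℂ) + t' = ((t' + t : ℝ) : ℂ) by push_cast; ring, hα.smoothOrbit_ofReal a hε,
    hα.smoothOrbit_ofReal a hε, hα.map_add t' t]
  rfl

theorem IsOneParamRep.tendsto_smoothOrbit_zero (hα : IsOneParamRep α) (a : E) :
    Tendsto (fun ε => smoothOrbit α a ε 0) (𝓝 0) (𝓝 ((√π : ℂ) • a)) := by
  simpa [smoothOrbit, hα.map_zero] using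
    tendsto_gaussianConv_comp_mul (hα.strong_cont a) (fun t => hα.norm_apply_le t a)

theorem IsOneParamRep.apply_smoothOrbit_eq_zero (hα : IsOneParamRep α) {z : ℂ} (hz : z.im ≠ 0)
    {φ : E →L[ℂ] ℂ} (hφ : ∀ a b, HasContVal α z a b → φ (a + b) = 0) (a : E) {ε : ℝ}
    (hε : ε ≠ 0) : φ (smoothOrbit α a ε 0) = 0 := by
  set h : ℂ → ℂ := fun w => φ (smoothOrbit α a ε w)
  have hdiff : Differentiable ℂ h := φ.differentiable.comp (hα.differentiable_smoothOrbit a ε)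
  have hanti : Antiperiodic h z := hdiff.antiperiodic_of_forall_ofReal fun t => by
    have := hφ _ _ (hα.hasContVal_smoothOrbit a hε z t)
    rwa [φ.map_add, add_comm, ← eq_neg_iff_add_eq_zero] at this
  have hbdd : IsBounded (h '' {w | |w.im| ≤ 2 * |z.im|}) := by
    rw [← image_image]
    exact φ.lipschitz.isBounded_image (hα.isBounded_image_smoothOrbit_abs_im_le a ε _)
  exact congr_fun (hdiff.eq_zero_of_antiperiodic hanti hz hbdd) 0

theorem IsOneParamRep.eq_zero_of_forall_hasContVal (hα : IsOneParamRep α) {z : ℂ}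
    (hz : z.im ≠ 0) {φ : E →L[ℂ] ℂ} (hφ : ∀ a b, HasContVal α z a b → φ (a + b) = 0) :
    φ = 0 := by
  ext a
  have hlim : Tendsto (fun ε => φ (smoothOrbit α a ε 0)) (𝓝[≠] 0) (𝓝 (φ ((√π : ℂ) • a))) :=
    (φ.continuous.tendsto _).comp ((hα.tendsto_smoothOrbit_zero a).mono_left nhdsWithin_le_nhds)
  have hev : (fun ε => φ (smoothOrbit α a ε 0)) =ᶠ[𝓝[≠] 0] fun _ => 0 :=
    eventually_nhdsWithin_of_forall fun ε hε => hα.apply_smoothOrbit_eq_zero hz hφ a hε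
  have hsqrt : (√π : ℂ) • φ a = 0 := by
    rw [← map_smul]
    exact tendsto_nhds_unique hlim (tendsto_const_nhds.congr' hev.symm)
  exact (smul_eq_zero.1 hsqrt).resolve_left (by exact_mod_cast (Real.sqrt_pos.2 Real.pi_pos).ne')

end OneParamRep

theorem one_add_cont_dense_range_general
    {H : Type*} [NormedAddCommGroup H] [InnerProductSpace ℂ H] [CompleteSpace H]
    (u : ℝ → H →L[ℂ] H) (hu : IsOneParamRep u)
    (z : ℂ) (hz : z.re = 0) (hz0 : z ≠ 0) :
    Dense {x : H | ∃ a b, HasContVal u z a b ∧ x = a + b} := by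
  have hzim : z.im ≠ 0 := fun h => hz0 (Complex.ext hz h)
  change Dense (rangeOneAddContVal u z : Set H)
  rw [Submodule.dense_iff_topologicalClosure_eq_top, Submodule.topologicalClosure_eq_top_iff,
    Submodule.eq_bot_iff]
  intro ω hω
  have hφ : innerSL ℂ ω = 0 := hu.eq_zero_of_forall_hasContVal hzim fun a b hab =>
    Submodule.inner_left_of_mem_orthogonal (show a + b ∈ rangeOneAddContVal u z from
      ⟨a, b, hab, rfl⟩) hω
  simpa using congr($hφ ω)

/-- For a strongly continuous one-parameter unitary group `u` on a Hilbert space and a purely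
imaginary `z ≠ 0`, the operator `1 + u_z` has dense range. -/
theorem one_add_cont_dense_range
    {H : Type*} [NormedAddCommGroup H] [InnerProductSpace ℂ H] [CompleteSpace H]
    (u : ℝ → H →L[ℂ] H) (hu : IsOneParamRep u)
    (huni : ∀ (t : ℝ) (x y : H), (inner ℂ (u t x) (u t y) : ℂ) = inner ℂ x y)
    (z : ℂ) (hz : z.re = 0) (hz0 : z ≠ 0) :
    Dense {x : H | ∃ a b, HasContVal u z a b ∧ x = a + b} :=
  one_add_cont_dense_range_general u hu z hz hz0
end
end
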